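/- arXiv:2503.08211 — 5 statements merged into one kernel-verified Lean document; each statement's English description precedes it below -/
import Mathlib

section
/- In the subtraction game on n ≥ 2 non-negative real variables (initially all zero, each round an adversary adds non-negative increments summing to at most 1, then a largest variable is decreased by 1 or set to 0 if below 1), after every round each variable is strictly less than the harmonic number H_{n-1}. -/
/-- The harmonicNum number `H m = ∑_{j=1}^m 1/j`. -/
noncomputable def harmonicNum (m : ℕ) : ℝ := ∑ j ∈ Finset.range m, (1 : ℝ) / (j + 1)

lemma harmonicNum_succ (m : ℕ) : harmonicNum (m + 1) = harmonicNum m + 1 / (m + 1) := by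
  simp [harmonicNum, Finset.sum_range_succ]

lemma harmonicNum_mono : Monotone harmonicNum := by
  apply monotone_nat_of_le_succ
  intro m
  rw [harmonicNum_succ]
  have : (0:ℝ) < 1 / (m + 1) := by positivity
  linarith

lemma one_le_harmonicNum (m : ℕ) (hm : 1 ≤ m) : 1 ≤ harmonicNum m := by
  have h1 : harmonicNum 1 = 1 := by simp [harmonicNum]
  calc (1:ℝ) = harmonicNum 1 := h1.symm
    _ ≤ harmonicNum m := harmonicNum_mono hm

/-- The potential values `d n k = k (H_{n-1} - H_k) + k`. -/
noncomputable def dval (n k : ℕ) : ℝ :=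
  (k : ℝ) * (harmonicNum (n - 1) - harmonicNum k) + k

lemma dval_zero (n : ℕ) : dval n 0 = 0 := by simp [dval]

lemma dval_one (n : ℕ) : dval n 1 = harmonicNum (n - 1) := by
  have h1 : harmonicNum 1 = 1 := by simp [harmonicNum]
  simp [dval, h1]

/-- Key algebraic identity: `k * (d (k+1) + 1) = (k+1) * d k`. -/
lemma dval_identity (n k : ℕ) :
    (k : ℝ) * (dval n (k + 1) + 1) = ((k : ℝ) + 1) * dval n k := by
  have hk : ((k : ℝ) + 1) ≠ 0 := by positivity
  simp only [dval, harmonicNum_succ, Nat.cast_add, Nat.cast_one]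
  field_simp
  ring

lemma dval_step_le (n k : ℕ) (hk : k + 1 ≤ n) : dval n k ≤ dval n (k + 1) := by
  have hH : harmonicNum k ≤ harmonicNum (n - 1) := by
    apply harmonicNum_mono
    omega
  have : dval n (k + 1) - dval n k = harmonicNum (n - 1) - harmonicNum k := by
    simp only [dval, harmonicNum_succ, Nat.cast_add, Nat.cast_one]
    have hk' : ((k : ℝ) + 1) ≠ 0 := by positivity
    field_simp
    ring
  linarith

lemma dval_mono (n : ℕ) : ∀ k l, k ≤ l → l ≤ n → dval n k ≤ dval n l := by
  intro k l hkl hln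
  induction l with
  | zero =>
    have : k = 0 := Nat.le_zero.mp hkl
    subst this
    exact le_refl _
  | succ m ih =>
    rcases Nat.lt_or_ge k (m + 1) with h | h
    · have h1 : dval n k ≤ dval n m := ih (by omega) (by omega)
      have h2 : dval n m ≤ dval n (m + 1) := dval_step_le n m hln
      linarith
    · have : k = m + 1 := by omega
      subst this; rfl

lemma dval_pos (n k : ℕ) (hn : 2 ≤ n) (hk : 1 ≤ k) (hkn : k ≤ n) : 0 < dval n k := by
  have h1 : (1:ℝ) ≤ harmonicNum (n - 1) := one_le_harmonicNum _ (by omega)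
  have h2 : dval n 1 ≤ dval n k := dval_mono n 1 k hk hkn
  rw [dval_one] at h2
  linarith

/-- In the subtraction game on `n ≥ 2` non-negative real variables (initially all zero;
each round an adversary adds non-negative increments summing to at most 1, then a largest
variable is decreased by 1, flooring at 0), after every round each variable is strictly
less than the harmonicNum number `H_{n-1}`. -/
theorem subtraction_game_bound (n : ℕ) (hn : 2 ≤ n)
    (x : ℕ → Fin n → ℝ)
    (hx0 : ∀ i, x 0 i = 0)
    (hstep : ∀ r, ∃ δ : Fin n → ℝ,
      (∀ i, 0 ≤ δ i) ∧ (∑ i, δ i) ≤ 1 ∧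
      ∃ i : Fin n, (∀ j, x r j + δ j ≤ x r i + δ i) ∧
        x (r + 1) i = max 0 (x r i + δ i - 1) ∧
        ∀ j, j ≠ i → x (r + 1) j = x r j + δ j) :
    ∀ r i, x r i < harmonicNum (n - 1) := by
  -- nonnegativity of all variables
  have hnn : ∀ r j, 0 ≤ x r j := by
    intro r
    induction r with
    | zero => intro j; rw [hx0]
    | succ r ih =>
      obtain ⟨δ, hδ0, hδsum, i, hmax, hxi, hxj⟩ := hstep r
      intro j
      by_cases hj : j = i
      · subst hj; rw [hxi]; exact le_max_left _ _
      · rw [hxj j hj]; exact add_nonneg (ih j) (hδ0 j)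
  -- the main invariant
  have key : ∀ r (T : Finset (Fin n)), T.Nonempty → ∑ j ∈ T, x r j < dval n T.card := by
    intro r
    induction r with
    | zero =>
      intro T hT
      have h0 : ∑ j ∈ T, x 0 j = 0 := by
        apply Finset.sum_eq_zero
        intro j _; exact hx0 j
      rw [h0]
      exact dval_pos n T.card hn (Finset.one_le_card.mpr hT)
        (le_trans (Finset.card_le_univ T) (by simp))
    | succ r ih =>
      obtain ⟨δ, hδ0, hδsum, i, hmax, hxi, hxj⟩ := hstep r
      set y : Fin n → ℝ := fun j => x r j + δ j with hy
      have hynn : ∀ j, 0 ≤ y j := fun j => add_nonneg (hnn r j) (hδ0 j)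
      -- after the increment, every subset sum is < d(card) + 1
      have hA : ∀ T : Finset (Fin n), ∑ j ∈ T, y j < dval n T.card + 1 := by
        intro T
        by_cases hT : T.Nonempty
        · have h1 : ∑ j ∈ T, δ j ≤ 1 := by
            refine le_trans ?_ hδsum
            exact Finset.sum_le_sum_of_subset_of_nonneg (Finset.subset_univ T)
              (fun j _ _ => hδ0 j)
          have h2 := ih T hT
          have h3 : ∑ j ∈ T, y j = ∑ j ∈ T, x r j + ∑ j ∈ T, δ j :=
            Finset.sum_add_distrib
          linarith
        · rw [Finset.not_nonempty_iff_eq_empty] at hT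
          subst hT
          simp [dval_zero]
      -- averaging: `y i` is max
      have havg : ∀ T : Finset (Fin n), ∑ j ∈ T, y j ≤ (T.card : ℝ) * y i := by
        intro T
        calc ∑ j ∈ T, y j ≤ ∑ _j ∈ T, y i := Finset.sum_le_sum (fun j _ => hmax j)
          _ = (T.card : ℝ) * y i := by rw [Finset.sum_const, nsmul_eq_mul]
      intro T hT
      have hkn : T.card ≤ n := le_trans (Finset.card_le_univ T) (by simp)
      have hk1 : 1 ≤ T.card := Finset.one_le_card.mpr hT
      by_cases hiT : i ∈ T
      · -- the reduced index is in T
        have hsplit : ∑ j ∈ T, x (r+1) j = x (r+1) i + ∑ j ∈ T.erase i, y j := by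
          rw [← Finset.add_sum_erase _ _ hiT]
          congr 1
          exact Finset.sum_congr rfl (fun j hj => hxj j (Finset.ne_of_mem_erase hj))
        have hysplit : ∑ j ∈ T, y j = y i + ∑ j ∈ T.erase i, y j :=
          (Finset.add_sum_erase _ _ hiT).symm
        rcases le_or_gt 1 (y i) with h1 | h1
        · -- full subtraction of 1
          have hxi' : x (r+1) i = y i - 1 := by
            rw [hxi]; exact max_eq_right (by show (0:ℝ) ≤ y i - 1; linarith)
          have := hA T
          rw [hsplit, hxi']
          linarith
        · -- floored at 0
          have hxi' : x (r+1) i = 0 := by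
            rw [hxi]; exact max_eq_left (by show y i - 1 ≤ (0:ℝ); linarith)
          rw [hsplit, hxi', zero_add]
          rcases eq_or_lt_of_le hk1 with hc1 | hc2
          · -- T = {i} : erase is empty
            have hcard0 : (T.erase i).card = 0 := by
              rw [Finset.card_erase_of_mem hiT]; omega
            have : T.erase i = ∅ := Finset.card_eq_zero.mp hcard0
            rw [this, Finset.sum_empty]
            exact dval_pos n T.card hn hk1 hkn
          · -- card ≥ 2
            set k := T.card with hkdef
            have hk2 : 2 ≤ k := hc2
            have hek : (T.erase i).card = k - 1 := Finset.card_erase_of_mem hiT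
            have e1 : ∑ j ∈ T.erase i, y j = ∑ j ∈ T, y j - y i := by linarith [hysplit]
            have e2 : ∑ j ∈ T, y j ≤ (k : ℝ) * y i := havg T
            have hST : ∑ j ∈ T, y j < dval n k + 1 := hA T
            have hSnn : 0 ≤ ∑ j ∈ T, y j :=
              Finset.sum_nonneg (fun j _ => hynn j)
            -- k * (sum erase) ≤ (k-1) * sum T < (k-1)(d k + 1) = k * d (k-1) ≤ k * d k
            have hmul : (k : ℝ) * (∑ j ∈ T.erase i, y j) ≤ ((k : ℝ) - 1) * ∑ j ∈ T, y j := by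
              rw [e1]; nlinarith [e2]
            have hkm1 : ((k - 1 : ℕ) : ℝ) = (k : ℝ) - 1 := by
              rw [Nat.cast_sub (by omega)]; simp
            have hid : ((k : ℝ) - 1) * (dval n k + 1) = (k : ℝ) * dval n (k - 1) := by
              have := dval_identity n (k - 1)
              rw [hkm1] at this
              have hkk : (k - 1) + 1 = k := by omega
              rw [hkk] at this
              linarith [this]
            have hdm : dval n (k - 1) ≤ dval n k := dval_mono n (k - 1) k (by omega) hkn
            have hstrict : ((k : ℝ) - 1) * ∑ j ∈ T, y j < ((k : ℝ) - 1) * (dval n k + 1) := by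
              apply mul_lt_mul_of_pos_left hST
              have : (2 : ℝ) ≤ (k : ℝ) := by exact_mod_cast hk2
              linarith
            have hkpos : (0 : ℝ) < (k : ℝ) := by exact_mod_cast (by omega : 0 < k)
            have : (k : ℝ) * (∑ j ∈ T.erase i, y j) < (k : ℝ) * dval n k := by
              calc (k : ℝ) * (∑ j ∈ T.erase i, y j) ≤ ((k : ℝ) - 1) * ∑ j ∈ T, y j := hmul
                _ < ((k : ℝ) - 1) * (dval n k + 1) := hstrict
                _ = (k : ℝ) * dval n (k - 1) := hid
                _ ≤ (k : ℝ) * dval n k := by nlinarith [hdm, hkpos]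
            exact lt_of_mul_lt_mul_left this (le_of_lt hkpos)
      · -- the reduced index is not in T
        have hsum : ∑ j ∈ T, x (r+1) j = ∑ j ∈ T, y j :=
          Finset.sum_congr rfl (fun j hj => hxj j (fun h => hiT (h ▸ hj)))
        set k := T.card with hkdef
        have hins : ∑ j ∈ insert i T, y j = y i + ∑ j ∈ T, y j := Finset.sum_insert hiT
        have hcard : (insert i T).card = k + 1 := Finset.card_insert_of_notMem hiT
        have havg' : ∑ j ∈ insert i T, y j ≤ ((k : ℝ) + 1) * y i := by
          have := havg (insert i T)
          rw [hcard] at this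
          push_cast at this
          exact this
        have hA' : ∑ j ∈ insert i T, y j < dval n (k + 1) + 1 := by
          have := hA (insert i T)
          rw [hcard] at this
          exact this
        -- (k+1) * sum T ≤ k * sum(insert) < k * (d(k+1)+1) = (k+1) d k
        have hSnn : 0 ≤ ∑ j ∈ insert i T, y j := Finset.sum_nonneg (fun j _ => hynn j)
        have hmul : ((k : ℝ) + 1) * (∑ j ∈ T, y j) ≤ (k : ℝ) * ∑ j ∈ insert i T, y j := by
          have : ∑ j ∈ T, y j = ∑ j ∈ insert i T, y j - y i := by linarith [hins]
          rw [this]; nlinarith [havg']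
        have hkpos : (0 : ℝ) < (k : ℝ) := by exact_mod_cast (by omega : 0 < k)
        have hstrict : (k : ℝ) * ∑ j ∈ insert i T, y j < (k : ℝ) * (dval n (k + 1) + 1) :=
          mul_lt_mul_of_pos_left hA' hkpos
        have hid := dval_identity n k
        have hmain : ((k : ℝ) + 1) * (∑ j ∈ T, y j) < ((k : ℝ) + 1) * dval n k := by
          have hc : ((k + 1 : ℕ) : ℝ) = (k : ℝ) + 1 := by push_cast; ring
          calc ((k : ℝ) + 1) * (∑ j ∈ T, y j) ≤ (k : ℝ) * ∑ j ∈ insert i T, y j := hmul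
            _ < (k : ℝ) * (dval n (k + 1) + 1) := hstrict
            _ = ((k : ℝ) + 1) * dval n k := hid
        rw [hsum]
        have hk1pos : (0 : ℝ) < (k : ℝ) + 1 := by positivity
        exact lt_of_mul_lt_mul_left hmain (le_of_lt hk1pos)
  intro r i
  have := key r {i} (Finset.singleton_nonempty i)
  simpa [dval_one] using this
end

section
/- In the zeroing game on n ≥ 2 non-negative real variables (initially all zero, each round an adversary adds non-negative increments summing to at most 1, then a largest variable is set to zero), after every step each variable is strictly less than H_{n-1} + 1. -/
lemma harmonicNum_one : harmonicNum 1 = 1 := by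
  simp [harmonicNum]

/-- In the zeroing game on `n ≥ 2` non-negative real variables (initially all zero;
each round an adversary adds non-negative increments summing to at most 1, then a largest
variable is set to zero), after every step each variable is strictly less than
`H_{n-1} + 1`.  Here `y (2*r)` is the state before the increment step of round `r+1`,
`y (2*r+1)` the state after the increment step, and `y (2*r+2)` the state after
the zeroing step. -/
theorem zeroing_game_bound (n : ℕ) (hn : 2 ≤ n)
    (y : ℕ → Fin n → ℝ)
    (hy0 : ∀ i, y 0 i = 0)
    (hinc : ∀ r, ∃ δ : Fin n → ℝ,
      (∀ i, 0 ≤ δ i) ∧ (∑ i, δ i) ≤ 1 ∧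
      ∀ i, y (2 * r + 1) i = y (2 * r) i + δ i)
    (hzero : ∀ r, ∃ i : Fin n,
      (∀ j, y (2 * r + 1) j ≤ y (2 * r + 1) i) ∧
      y (2 * r + 2) i = 0 ∧
      ∀ j, j ≠ i → y (2 * r + 2) j = y (2 * r + 1) j) :
    ∀ t i, y t i < harmonicNum (n - 1) + 1 := by
  set H : ℝ := harmonicNum (n - 1) with hHdef
  set B : ℕ → ℝ := fun k => k * (1 + H - harmonicNum k) with hBdef
  have hcast : ((n - 1 : ℕ) : ℝ) + 1 = (n : ℝ) := by
    rw [Nat.cast_sub (by omega : 1 ≤ n)]; push_cast; ring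
  have hHn : harmonicNum n = H + 1 / (n : ℝ) := by
    have h1 : n - 1 + 1 = n := by omega
    have := harmonicNum_succ (n - 1)
    rw [h1, hcast] at this
    exact this
  have hn2 : (2 : ℝ) ≤ (n : ℝ) := by exact_mod_cast hn
  have hBpos : ∀ k : ℕ, 1 ≤ k → k ≤ n → 0 < B k := by
    intro k hk1 hkn
    have h1 : harmonicNum k ≤ harmonicNum n := harmonicNum_mono hkn
    have h2 : 1 / (n : ℝ) < 1 := by
      rw [div_lt_one (by linarith)]; linarith
    have hk1' : (1 : ℝ) ≤ (k : ℝ) := by exact_mod_cast hk1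
    have : 0 < 1 + H - harmonicNum k := by rw [hHn] at h1; linarith
    exact mul_pos (by linarith) this
  have hBstep : ∀ j : ℕ, j + 1 ≤ n → B j ≤ B (j + 1) := by
    intro j hj
    have hHj : harmonicNum j ≤ H := harmonicNum_mono (by omega : j ≤ n - 1)
    have heq : B (j + 1) = B j + (H - harmonicNum j) := by
      simp only [hBdef, harmonicNum_succ]
      push_cast
      field_simp
      ring
    rw [heq]; linarith
  have hBmono : ∀ j k : ℕ, j ≤ k → k ≤ n → B j ≤ B k := by
    intro j k hjk hkn
    induction k with
    | zero =>
      have : j = 0 := by omega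
      rw [this]
    | succ k ih =>
      rcases Nat.lt_or_ge j (k + 1) with h | h
      · have : j ≤ k := by omega
        exact le_trans (ih this (by omega)) (hBstep k hkn)
      · have : j = k + 1 := by omega
        rw [this]
  have hBkey : ∀ m : ℕ, ((m : ℝ) / ((m : ℝ) + 1)) * (B (m + 1) + 1) = B m := by
    intro m
    simp only [hBdef, harmonicNum_succ]
    have hm : ((m : ℝ) + 1) ≠ 0 := by positivity
    push_cast
    field_simp
    ring
  have hcardn : ∀ S : Finset (Fin n), S.card ≤ n := by
    intro S
    calc S.card ≤ Finset.univ.card := Finset.card_le_univ S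
    _ = n := by simp
  -- main invariant at even times
  have key : ∀ r : ℕ, ∀ S : Finset (Fin n), S.Nonempty →
      ∑ i ∈ S, y (2 * r) i < B S.card := by
    intro r
    induction r with
    | zero =>
      intro S hS
      have h0 : ∑ i ∈ S, y (2 * 0) i = 0 := by
        rw [Finset.sum_congr rfl (fun i _ => by simpa using hy0 i)]
        simp
      rw [h0]
      exact hBpos _ (Finset.one_le_card.2 hS) (hcardn S)
    | succ r ih =>
      obtain ⟨δ, hδ0, hδsum, hδ⟩ := hinc r
      obtain ⟨i₀, hmax, hz0, hkeep⟩ := hzero r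
      intro S hS
      have h2 : 2 * (r + 1) = 2 * r + 2 := by ring
      rw [h2]
      set T := S.erase i₀ with hTdef
      have hsum : ∑ i ∈ S, y (2 * r + 2) i = ∑ i ∈ T, y (2 * r + 1) i := by
        by_cases hi : i₀ ∈ S
        · rw [← Finset.add_sum_erase _ _ hi, hz0, zero_add]
          exact Finset.sum_congr rfl (fun j hj => hkeep j (Finset.ne_of_mem_erase hj))
        · rw [hTdef, Finset.erase_eq_self.2 hi]
          exact Finset.sum_congr rfl (fun j hj => hkeep j (fun h => hi (h ▸ hj)))
      rw [hsum]
      rcases T.eq_empty_or_nonempty with hTe | hTne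
      · rw [hTe, Finset.sum_empty]
        exact hBpos _ (Finset.one_le_card.2 hS) (hcardn S)
      · set m := T.card with hmdef
        have hm1 : 1 ≤ m := Finset.one_le_card.2 hTne
        have hi₀T : i₀ ∉ T := Finset.notMem_erase _ _
        set U := insert i₀ T with hUdef
        have hUcard : U.card = m + 1 := Finset.card_insert_of_notMem hi₀T
        have hmn : m + 1 ≤ n := hUcard ▸ hcardn U
        have hUsum_le : ∑ i ∈ U, y (2 * r + 1) i ≤ ((m : ℝ) + 1) * y (2 * r + 1) i₀ := by
          calc ∑ i ∈ U, y (2 * r + 1) i ≤ ∑ _i ∈ U, y (2 * r + 1) i₀ :=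
                Finset.sum_le_sum (fun j _ => hmax j)
          _ = ((m : ℝ) + 1) * y (2 * r + 1) i₀ := by
                rw [Finset.sum_const, hUcard]; push_cast; ring
        have hTsum : ∑ i ∈ T, y (2 * r + 1) i
            = ∑ i ∈ U, y (2 * r + 1) i - y (2 * r + 1) i₀ := by
          rw [hUdef, Finset.sum_insert hi₀T]; ring
        have hU2 : ∑ i ∈ U, y (2 * r + 1) i < B (m + 1) + 1 := by
          have e : ∑ i ∈ U, y (2 * r + 1) i = ∑ i ∈ U, y (2 * r) i + ∑ i ∈ U, δ i := by
            rw [← Finset.sum_add_distrib]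
            exact Finset.sum_congr rfl (fun i _ => hδ i)
          have h1 : ∑ i ∈ U, δ i ≤ 1 :=
            le_trans (Finset.sum_le_sum_of_subset_of_nonneg (Finset.subset_univ U)
              (fun i _ _ => hδ0 i)) hδsum
          have h2 := ih U ⟨i₀, Finset.mem_insert_self _ _⟩
          rw [hUcard] at h2
          rw [e]; linarith
        have hmpos : (0 : ℝ) < (m : ℝ) := by exact_mod_cast hm1
        have hfrac : ∑ i ∈ T, y (2 * r + 1) i
            ≤ ((m : ℝ) / ((m : ℝ) + 1)) * ∑ i ∈ U, y (2 * r + 1) i := by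
          have hdenom : (0 : ℝ) < (m : ℝ) + 1 := by linarith
          have hi0 : (∑ i ∈ U, y (2 * r + 1) i) / ((m : ℝ) + 1) ≤ y (2 * r + 1) i₀ := by
            rw [div_le_iff₀ hdenom]; nlinarith [hUsum_le]
          have heq : ((m : ℝ) / ((m : ℝ) + 1)) * ∑ i ∈ U, y (2 * r + 1) i
              = ∑ i ∈ U, y (2 * r + 1) i - (∑ i ∈ U, y (2 * r + 1) i) / ((m : ℝ) + 1) := by
            field_simp
            ring
          rw [heq, hTsum]; linarith
        have hlt : ∑ i ∈ T, y (2 * r + 1) i < B m := by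
          have hpos : (0 : ℝ) < (m : ℝ) / ((m : ℝ) + 1) := by positivity
          calc ∑ i ∈ T, y (2 * r + 1) i
              ≤ ((m : ℝ) / ((m : ℝ) + 1)) * ∑ i ∈ U, y (2 * r + 1) i := hfrac
          _ < ((m : ℝ) / ((m : ℝ) + 1)) * (B (m + 1) + 1) :=
              mul_lt_mul_of_pos_left hU2 hpos
          _ = B m := hBkey m
        have hmS : m ≤ S.card := Finset.card_le_card (Finset.erase_subset _ _)
        exact lt_of_lt_of_le hlt (hBmono m S.card hmS (hcardn S))
  have heven : ∀ r : ℕ, ∀ i : Fin n, y (2 * r) i < H := by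
    intro r i
    have h := key r {i} (Finset.singleton_nonempty i)
    rw [Finset.sum_singleton, Finset.card_singleton] at h
    have hB1 : B 1 = H := by
      simp [hBdef, harmonicNum_one]
    rwa [hB1] at h
  intro t i
  rcases Nat.even_or_odd t with ⟨r, hr⟩ | ⟨r, hr⟩
  · have hr' : t = 2 * r := by omega
    rw [hr']
    linarith [heven r i]
  · have hr' : t = 2 * r + 1 := by omega
    obtain ⟨δ, hδ0, hδsum, hδ⟩ := hinc r
    have hδi : δ i ≤ 1 :=
      le_trans (Finset.single_le_sum (fun j _ => hδ0 j) (Finset.mem_univ i)) hδsum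
    rw [hr', hδ i]
    linarith [heven r i]
end

section
/- In the subtraction game on n ≥ 2 variables, the total sum Σ_{i=1}^n x_i is strictly less than n − 1 after every round. -/
/-- In the subtraction game on `n ≥ 2` variables, the total sum `∑ i x i` is strictly
less than `n - 1` after every round. -/
theorem subtraction_game_sum_bound (n : ℕ) (hn : 2 ≤ n)
    (x : ℕ → Fin n → ℝ)
    (hx0 : ∀ i, x 0 i = 0)
    (hstep : ∀ r, ∃ δ : Fin n → ℝ,
      (∀ i, 0 ≤ δ i) ∧ (∑ i, δ i) ≤ 1 ∧
      ∃ i : Fin n, (∀ j, x r j + δ j ≤ x r i + δ i) ∧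
        x (r + 1) i = max 0 (x r i + δ i - 1) ∧
        ∀ j, j ≠ i → x (r + 1) j = x r j + δ j) :
    ∀ r, (∑ i, x r i) < (n : ℝ) - 1 := by
  have hnR : (2:ℝ) ≤ n := by exact_mod_cast hn
  have key : ∀ r, (∀ j, 0 ≤ x r j) ∧ (∑ i, x r i) < (n : ℝ) - 1 := by
    intro r
    induction r with
    | zero =>
      refine ⟨fun j => le_of_eq (hx0 j).symm, ?_⟩
      simp only [hx0, Finset.sum_const_zero]
      linarith
    | succ r ih =>
      obtain ⟨hpos, hsum⟩ := ih
      obtain ⟨δ, hδ0, hδsum, i, hmax, hxi, hxj⟩ := hstep r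
      set m := x r i + δ i with hm
      set T := ∑ j, (x r j + δ j) with hT
      have hT0 : 0 ≤ T := Finset.sum_nonneg fun j _ => add_nonneg (hpos j) (hδ0 j)
      have hTS : T = (∑ j, x r j) + ∑ j, δ j := by
        rw [hT, Finset.sum_add_distrib]
      have hTn : T < n := by rw [hTS]; linarith
      have havg : T ≤ n * m := by
        calc T ≤ ∑ _j : Fin n, m := Finset.sum_le_sum fun j _ => hmax j
        _ = n * m := by simp [Finset.sum_const, mul_comm]
      have hpos' : ∀ j, 0 ≤ x (r+1) j := by
        intro j
        by_cases hji : j = i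
        · rw [hji, hxi]; exact le_max_left _ _
        · rw [hxj j hji]; exact add_nonneg (hpos j) (hδ0 j)
      refine ⟨hpos', ?_⟩
      have hnewsum : ∑ j, x (r+1) j = x (r+1) i + (T - m) := by
        rw [← Finset.add_sum_erase _ _ (Finset.mem_univ i)]
        congr 1
        have he : ∑ j ∈ Finset.univ.erase i, x (r+1) j
            = ∑ j ∈ Finset.univ.erase i, (x r j + δ j) :=
          Finset.sum_congr rfl fun j hj => hxj j (Finset.ne_of_mem_erase hj)
        rw [he, Finset.sum_erase_eq_sub (Finset.mem_univ i)]
      by_cases h1 : (1:ℝ) ≤ m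
      · have : x (r+1) i = m - 1 := by
          rw [hxi]; exact max_eq_right (by linarith)
        rw [hnewsum, this, hTS]
        linarith
      · push_neg at h1
        have : x (r+1) i = 0 := by
          rw [hxi]; exact max_eq_left (by linarith)
        rw [hnewsum, this]
        have hm0 : 0 ≤ m := add_nonneg (hpos i) (hδ0 i)
        nlinarith [mul_pos (by linarith : (0:ℝ) < (n:ℝ)) (by linarith : (0:ℝ) < (n:ℝ) - T)]
  intro r; exact (key r).2
end

section
/- In the subtraction game scaled by a factor F (increments per round sum to at most F, and the subtraction step decreases a largest variable by F, flooring at 0) on n variables, all variables remain strictly below F·(H_{n-1}) at all times after each round; in particular with n = 2Δ children all buffered-update counts per child are O(F·log₂ Δ). -/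
/-- In the subtraction game scaled by a factor `F` (increments per round summing to at
most `F`, subtraction step decreasing a largest variable by `F`, flooring at 0) on
`n ≥ 2` variables, all variables remain strictly below `F · H_{n-1}` after every round. -/
theorem scaled_subtraction_game_bound (n F : ℕ) (hn : 2 ≤ n) (hF : 1 ≤ F)
    (x : ℕ → Fin n → ℝ)
    (hx0 : ∀ i, x 0 i = 0)
    (hstep : ∀ r, ∃ δ : Fin n → ℝ,
      (∀ i, 0 ≤ δ i) ∧ (∑ i, δ i) ≤ (F : ℝ) ∧
      ∃ i : Fin n, (∀ j, x r j + δ j ≤ x r i + δ i) ∧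
        x (r + 1) i = max 0 (x r i + δ i - F) ∧
        ∀ j, j ≠ i → x (r + 1) j = x r j + δ j) :
    ∀ r i, x r i < (F : ℝ) * harmonicNum (n - 1) := by
  set H : ℝ := harmonicNum (n - 1) with hHdef
  have hn1 : (n - 1) + 1 = n := by omega
  have hF0 : (0:ℝ) < F := by
    have : (1:ℝ) ≤ F := by exact_mod_cast hF
    linarith
  have hncast : ((n - 1 : ℕ) : ℝ) + 1 = (n : ℝ) := by
    rw [Nat.cast_sub (by omega)]; push_cast; ring
  have hHn : harmonicNum n = H + 1 / (n : ℝ) := by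
    rw [← hn1, harmonicNum_succ, hn1, hncast, hHdef]
  set c : ℕ → ℝ := fun k => (F:ℝ) * k * (1 + H - harmonicNum k) with hc
  have hid : ∀ k : ℕ, ((k:ℝ) + 1) * c k = (k:ℝ) * (c (k+1) + F) := by
    intro k
    simp only [hc, harmonicNum_succ, Nat.cast_succ]
    have hk1 : ((k:ℝ)+1) ≠ 0 := by positivity
    field_simp
    ring
  have hkey : ∀ k : ℕ, 1 ≤ k → k ≤ n → (k:ℝ) * (harmonicNum k - H) ≤ 1 := by
    intro k hk1 hkn
    rcases eq_or_lt_of_le hkn with h | h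
    · rw [h, hHn]
      have hn0 : (0:ℝ) < (n:ℝ) := by positivity
      rw [show H + 1 / (n:ℝ) - H = 1 / (n:ℝ) by ring]
      rw [mul_one_div, div_le_one hn0]
    · have hk : harmonicNum k ≤ H := hHdef ▸ harmonicNum_mono (by omega : k ≤ n - 1)
      have : (k:ℝ) * (harmonicNum k - H) ≤ 0 :=
        mul_nonpos_of_nonneg_of_nonpos (by positivity) (by linarith)
      linarith
  have hcpos : ∀ k : ℕ, 1 ≤ k → k ≤ n → 0 < c k := by
    intro k hk1 hkn
    have h1 : harmonicNum k ≤ harmonicNum n := harmonicNum_mono hkn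
    have h2 : (1:ℝ) / n < 1 := by
      rw [div_lt_one (by positivity)]
      exact_mod_cast hn.trans_lt' (by norm_num)
    have hk0 : (0:ℝ) < k := by exact_mod_cast hk1
    have : harmonicNum k < 1 + H := by rw [hHn] at h1; linarith
    simp only [hc]
    apply mul_pos (mul_pos hF0 hk0)
    linarith
  have hclb : ∀ k : ℕ, 1 ≤ k → k ≤ n → (F:ℝ) * ((k:ℝ) - 1) ≤ c k := by
    intro k hk1 hkn
    have h1 := mul_nonneg hF0.le (sub_nonneg.2 (hkey k hk1 hkn))
    simp only [hc]
    nlinarith [h1]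
  have inv : ∀ r, ∀ S : Finset (Fin n), S.Nonempty → ∑ j ∈ S, x r j < c S.card := by
    intro r
    induction r with
    | zero =>
      intro S hS
      simp only [hx0, Finset.sum_const_zero]
      exact hcpos _ hS.card_pos (le_trans (Finset.card_le_univ S) (by simp))
    | succ r ih =>
      obtain ⟨δ, hδ0, hδsum, i, hmax, hi, hothers⟩ := hstep r
      intro S hS
      set y : Fin n → ℝ := fun j => x r j + δ j with hy
      have hyS : ∀ T : Finset (Fin n), T.Nonempty → ∑ j ∈ T, y j < c T.card + F := by
        intro T hT
        have h1 : ∑ j ∈ T, δ j ≤ F :=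
          le_trans (Finset.sum_le_sum_of_subset_of_nonneg (Finset.subset_univ T)
            (fun j _ _ => hδ0 j)) hδsum
        have h2 := ih T hT
        simp only [hy]
        rw [Finset.sum_add_distrib]
        linarith
      by_cases hiS : i ∈ S
      · have hsum : ∑ j ∈ S, x (r+1) j = x (r+1) i + ∑ j ∈ S.erase i, y j := by
          rw [← Finset.add_sum_erase _ _ hiS]
          congr 1
          exact Finset.sum_congr rfl fun j hj => hothers j (Finset.ne_of_mem_erase hj)
        have herase : ∑ j ∈ S.erase i, y j = ∑ j ∈ S, y j - y i := by
          rw [← Finset.add_sum_erase _ y hiS]; ring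
        by_cases hge : (F:ℝ) ≤ y i
        · have hxi : x (r+1) i = y i - F := by
            rw [hi, max_eq_right (by simp only [hy] at hge ⊢; linarith)]
          have hS' := hyS S hS
          rw [hsum, herase, hxi]
          linarith
        · push_neg at hge
          have hxi : x (r+1) i = 0 := by
            rw [hi, max_eq_left (by simp only [hy] at hge ⊢; linarith)]
          rw [hsum, hxi, zero_add]
          have hcard : S.card ≤ n := le_trans (Finset.card_le_univ S) (by simp)
          rcases Nat.lt_or_ge S.card 2 with h2 | h2
          · have hc1 : S.card = 1 := by
              have := hS.card_pos; omega
            have : S.erase i = ∅ := by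
              apply Finset.card_eq_zero.mp
              rw [Finset.card_erase_of_mem hiS, hc1]
            rw [this, Finset.sum_empty]
            exact hcpos _ hS.card_pos hcard
          · have hne : (S.erase i).Nonempty := by
              rw [← Finset.card_pos, Finset.card_erase_of_mem hiS]; omega
            have hlt : ∑ j ∈ S.erase i, y j < (S.erase i).card • (F:ℝ) := by
              have := Finset.sum_lt_sum_of_nonempty hne
                (f := y) (g := fun _ => (F:ℝ)) (fun j _ => lt_of_le_of_lt (hmax j) hge)
              rwa [Finset.sum_const] at this
            have hcarde : (S.erase i).card = S.card - 1 := Finset.card_erase_of_mem hiS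
            have hcast : ((S.card - 1 : ℕ) : ℝ) = (S.card : ℝ) - 1 := by
              rw [Nat.cast_sub hS.card_pos]; norm_num
            rw [hcarde, nsmul_eq_mul, hcast] at hlt
            calc ∑ j ∈ S.erase i, y j < ((S.card:ℝ) - 1) * F := hlt
              _ = (F:ℝ) * ((S.card:ℝ) - 1) := by ring
              _ ≤ c S.card := hclb _ hS.card_pos hcard
      · have hsum : ∑ j ∈ S, x (r+1) j = ∑ j ∈ S, y j :=
          Finset.sum_congr rfl fun j hj => hothers j (fun h => hiS (h ▸ hj))
        rw [hsum]
        set S' : Finset (Fin n) := insert i S with hS'def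
        have hcard' : S'.card = S.card + 1 := Finset.card_insert_of_notMem hiS
        have hins : ∑ j ∈ S', y j = y i + ∑ j ∈ S, y j := Finset.sum_insert hiS
        have havg : ∑ j ∈ S', y j ≤ (S'.card : ℝ) * y i := by
          have := Finset.sum_le_card_nsmul S' y (y i) (fun j _ => hmax j)
          rwa [nsmul_eq_mul] at this
        have hlt' : ∑ j ∈ S', y j < c S'.card + F := hyS S' ⟨i, Finset.mem_insert_self i S⟩
        set k : ℕ := S.card with hk
        have hk1 : (1:ℝ) ≤ (k:ℝ) := by exact_mod_cast hS.card_pos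
        rw [hcard'] at havg hlt'
        have hidk := hid k
        push_cast at havg hlt' hidk ⊢
        nlinarith [mul_pos (show (0:ℝ) < (k:ℝ) + 1 by linarith)
          (show (0:ℝ) < c (k+1) + F - ∑ j ∈ S', y j by linarith),
          mul_le_mul_of_nonneg_left (show ∑ j ∈ S', y j ≤ ((k:ℝ)+1) * y i from havg)
            (show (0:ℝ) ≤ (k:ℝ) by linarith)]
  intro r i
  have h := inv r {i} ⟨i, Finset.mem_singleton_self i⟩
  simp only [Finset.sum_singleton, Finset.card_singleton] at h
  have hc1 : c 1 = (F:ℝ) * H := by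
    simp only [hc]
    have : harmonicNum 1 = 1 := by simp [harmonicNum]
    rw [this]; push_cast; ring
  rw [hc1] at h
  exact h
end

section
/- In the zeroing game on at most n variables where each round the sum of increments is at most 1 and the round ends by zeroing a maximum variable, every variable x_i satisfies x_i ≤ log₂ n + 1 at all times. -/
noncomputable def zgH : ℕ → ℝ := fun m => ∑ j ∈ Finset.range m, (1:ℝ)/(j+1)

lemma zgH_succ (m : ℕ) : zgH (m+1) = zgH m + 1/(m+1) := by
  simp [zgH, Finset.sum_range_succ]

lemma zgH_mono : Monotone zgH := by
  intro a b hab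
  apply Finset.sum_le_sum_of_subset_of_nonneg (Finset.range_subset_range.2 hab)
  intro j _ _
  positivity

lemma zgH_le_logb (m : ℕ) : zgH m ≤ Real.logb 2 (m+1) := by
  induction m with
  | zero => simp [zgH]
  | succ m ih =>
    rw [zgH_succ]
    have hm1 : (0:ℝ) < (m:ℝ) + 1 := by positivity
    have key : (1:ℝ)/((m:ℝ)+1) ≤ Real.logb 2 ((m:ℝ)+2) - Real.logb 2 ((m:ℝ)+1) := by
      have hx : (0:ℝ) ≤ 1/((m:ℝ)+1) := by positivity
      have hpow : (2:ℝ) ≤ (1 + 1/((m:ℝ)+1))^(m+1) := by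
        have h := one_add_mul_le_pow (a := (1:ℝ)/((m:ℝ)+1)) (by linarith) (m+1)
        have h2 : ((m:ℝ)+1) * (1/((m:ℝ)+1)) = 1 := by field_simp
        push_cast at h
        linarith
      have hlog := Real.logb_le_logb_of_le (by norm_num : (1:ℝ) < 2) (by norm_num) hpow
      rw [Real.logb_self_eq_one (by norm_num), Real.logb_pow] at hlog
      have h3 : Real.logb 2 (1 + 1/((m:ℝ)+1)) = Real.logb 2 ((m:ℝ)+2) - Real.logb 2 ((m:ℝ)+1) := by
        rw [← Real.logb_div (by positivity) (by positivity)]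
        congr 1
        field_simp
        ring
      rw [h3] at hlog
      rw [div_le_iff₀ hm1] at *
      push_cast at hlog ⊢
      nlinarith [hlog]
    push_cast
    have e : Real.logb 2 ((m:ℝ)+1+1) = Real.logb 2 ((m:ℝ)+2) := by congr 1; ring
    linarith [key]


/-- In the zeroing game on `n ≥ 2` variables (each round non-negative increments
summing to at most 1 are added, then a maximum variable is set to 0), every variable
satisfies `x ≤ log₂ n + 1` at all times.  Here `y (2*r)` is the state before the
increment step of round `r+1`, `y (2*r+1)` the state after the increment step, and
`y (2*r+2)` the state after the zeroing step. -/
theorem zeroing_game_log_bound (n : ℕ) (hn : 2 ≤ n)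
    (y : ℕ → Fin n → ℝ)
    (hy0 : ∀ i, y 0 i = 0)
    (hinc : ∀ r, ∃ δ : Fin n → ℝ,
      (∀ i, 0 ≤ δ i) ∧ (∑ i, δ i) ≤ 1 ∧
      ∀ i, y (2 * r + 1) i = y (2 * r) i + δ i)
    (hzero : ∀ r, ∃ i : Fin n,
      (∀ j, y (2 * r + 1) j ≤ y (2 * r + 1) i) ∧
      y (2 * r + 2) i = 0 ∧
      ∀ j, j ≠ i → y (2 * r + 2) j = y (2 * r + 1) j) :
    ∀ t i, y t i ≤ Real.logb 2 n + 1 := by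
  set A : ℝ := zgH (n-1) with hA
  set G : ℕ → ℝ := fun k => (k:ℝ) * (1 + A - zgH (k-1)) with hG
  -- basic facts about G
  have hAnn : 0 ≤ A := by
    rw [hA, zgH]
    positivity
  have Gzero : G 0 = 0 := by simp [hG]
  have Gone : G 1 = 1 + A := by simp [hG, zgH]
  have Gstep : ∀ m : ℕ, m + 1 ≤ n → G m ≤ G (m+1) := by
    intro m hm
    cases m with
    | zero =>
      rw [Gzero, Gone]
      linarith
    | succ m =>
      have hm' : zgH (m+1) ≤ A := by
        rw [hA]
        exact zgH_mono (by omega)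
      simp only [hG, Nat.add_sub_cancel]
      rw [zgH_succ] at hm' ⊢
      have hp : (0:ℝ) < (m:ℝ) + 1 := by positivity
      have e1 : ((m:ℝ)+1) * (1/((m:ℝ)+1)) = 1 := by field_simp
      push_cast
      nlinarith [hm', e1]
  have Gmono : ∀ k l : ℕ, k ≤ l → l ≤ n → G k ≤ G l := by
    intro k l hkl hln
    induction l with
    | zero =>
      have : k = 0 := by omega
      simp [this]
    | succ l ihl =>
      rcases Nat.lt_or_ge k (l+1) with h | h
      · exact le_trans (ihl (by omega) (by omega)) (Gstep l hln)
      · have : k = l + 1 := by omega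
        simp [this]
  have Grec : ∀ m : ℕ, G (m+1) = ((m:ℝ)+1)/((m:ℝ)+2) * G (m+2) + 1 := by
    intro m
    simp only [hG, Nat.add_sub_cancel]
    rw [show m+2-1 = m+1 from rfl, zgH_succ]
    have hp : (0:ℝ) < (m:ℝ) + 2 := by positivity
    push_cast
    field_simp
    ring
  have Gge1 : ∀ k : ℕ, 1 ≤ k → k ≤ n → (1:ℝ) ≤ G k := by
    intro k h1 h2
    have hk : zgH (k-1) ≤ A := by
      rw [hA]; exact zgH_mono (by omega)
    have hk1 : (1:ℝ) ≤ (k:ℝ) := by exact_mod_cast h1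
    simp only [hG]
    nlinarith [hk, hk1]
  -- the key invariant at odd times
  have key : ∀ r (S : Finset (Fin n)), (∑ i ∈ S, y (2*r+1) i) ≤ G S.card := by
    intro r
    induction r with
    | zero =>
      intro S
      obtain ⟨δ, hδ0, hδ1, hδeq⟩ := hinc 0
      have hyS : ∑ i ∈ S, y (2*0+1) i = ∑ i ∈ S, δ i := by
        apply Finset.sum_congr rfl
        intro i _
        rw [hδeq i, hy0 i]
        ring
      rcases S.eq_empty_or_nonempty with rfl | hS
      · simp [Gzero]
      · have h1 : ∑ i ∈ S, δ i ≤ 1 :=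
          le_trans (Finset.sum_le_sum_of_subset_of_nonneg (Finset.subset_univ S)
            (fun i _ _ => hδ0 i)) hδ1
        have hc1 : 1 ≤ S.card := Finset.card_pos.2 hS
        have hcn : S.card ≤ n := le_trans (Finset.card_le_card (Finset.subset_univ S))
          (by simp)
        rw [hyS]
        exact le_trans h1 (Gge1 _ hc1 hcn)
    | succ r ih =>
      intro S
      obtain ⟨δ, hδ0, hδ1, hδeq⟩ := hinc (r+1)
      obtain ⟨w, hmax, hz, hkeep⟩ := hzero r
      rcases S.eq_empty_or_nonempty with rfl | hS
      · simp [Gzero]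
      set T := S.erase w with hT
      have hwT : w ∉ T := Finset.notMem_erase _ _
      have step1 : ∑ i ∈ S, y (2*(r+1)+1) i ≤ (∑ i ∈ T, y (2*r+1) i) + 1 := by
        have e1 : ∀ i, y (2*(r+1)+1) i = y (2*r+2) i + δ i := by
          intro i
          have h := hδeq i
          have e : 2*(r+1) = 2*r+2 := by ring
          rw [e] at h
          exact h
        rw [Finset.sum_congr rfl (fun i _ => e1 i), Finset.sum_add_distrib]
        have e2 : ∑ i ∈ S, y (2*r+2) i = ∑ i ∈ T, y (2*r+1) i := by
          by_cases hw : w ∈ S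
          · rw [← Finset.add_sum_erase S _ hw, hz, zero_add, ← hT]
            exact Finset.sum_congr rfl (fun i hi => hkeep i (Finset.ne_of_mem_erase hi))
          · rw [hT, Finset.erase_eq_of_notMem hw]
            exact Finset.sum_congr rfl
              (fun i hi => hkeep i (fun h => hw (h ▸ hi)))
        have e3 : ∑ i ∈ S, δ i ≤ 1 :=
          le_trans (Finset.sum_le_sum_of_subset_of_nonneg (Finset.subset_univ S)
            (fun i _ _ => hδ0 i)) hδ1
        linarith [e2, e3]
      have hcS1 : 1 ≤ S.card := Finset.card_pos.2 hS
      have hcSn : S.card ≤ n := le_trans (Finset.card_le_card (Finset.subset_univ S)) (by simp)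
      have h1 : ∑ i ∈ T, y (2*r+1) i ≤ (T.card : ℝ)/((T.card:ℝ)+1) * G (T.card+1) := by
        have hins := ih (insert w T)
        rw [Finset.card_insert_of_notMem hwT] at hins
        rw [Finset.sum_insert hwT] at hins
        have hub : y (2*r+1) w + ∑ i ∈ T, y (2*r+1) i ≤ ((T.card:ℝ) + 1) * y (2*r+1) w := by
          have h := Finset.sum_le_card_nsmul (insert w T) (y (2*r+1)) (y (2*r+1) w)
            (fun x _ => hmax x)
          rw [Finset.sum_insert hwT, Finset.card_insert_of_notMem hwT] at h
          rw [nsmul_eq_mul] at h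
          push_cast at h
          linarith
        have hk1 : (0:ℝ) < (T.card:ℝ) + 1 := Nat.cast_add_one_pos _
        -- y w ≥ (sum over insert)/(k+1)
        have hyw : (y (2*r+1) w + ∑ i ∈ T, y (2*r+1) i) / ((T.card:ℝ)+1) ≤ y (2*r+1) w := by
          rw [div_le_iff₀ hk1]
          linarith
        have hfrac : (0:ℝ) ≤ (T.card:ℝ)/((T.card:ℝ)+1) := div_nonneg (Nat.cast_nonneg _) hk1.le
        have hsplit : ∑ i ∈ T, y (2*r+1) i
            ≤ (T.card:ℝ)/((T.card:ℝ)+1) * (y (2*r+1) w + ∑ i ∈ T, y (2*r+1) i) := by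
          rw [div_mul_eq_mul_div, le_div_iff₀ hk1]
          nlinarith [hyw, hk1]
        calc ∑ i ∈ T, y (2*r+1) i
            ≤ (T.card:ℝ)/((T.card:ℝ)+1) * (y (2*r+1) w + ∑ i ∈ T, y (2*r+1) i) := hsplit
          _ ≤ (T.card:ℝ)/((T.card:ℝ)+1) * G (T.card+1) :=
              mul_le_mul_of_nonneg_left hins hfrac
      have hTS : T.card ≤ S.card := by
        rw [hT]
        exact Finset.card_erase_le
      have h2 : (T.card : ℝ)/((T.card:ℝ)+1) * G (T.card+1) + 1 ≤ G S.card := by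
        rcases Nat.eq_zero_or_pos T.card with h0 | hpos
        · rw [h0]
          simp only [Nat.cast_zero, zero_div, zero_mul, zero_add]
          exact Gge1 _ hcS1 hcSn
        · obtain ⟨m, hm⟩ : ∃ m, T.card = m+1 := ⟨T.card - 1, by omega⟩
          rw [hm]
          have := Grec m
          push_cast
          rw [show ((m:ℝ)+1)+1 = (m:ℝ)+2 by ring, ← this]
          exact Gmono (m+1) S.card (by omega) hcSn
      linarith [step1, h1, h2]
  -- conclude
  have hb : A ≤ Real.logb 2 n := by
    have h := zgH_le_logb (n-1)
    have e : ((n-1:ℕ):ℝ) + 1 = (n:ℝ) := by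
      rw [Nat.cast_sub (by omega : 1 ≤ n)]
      ring
    rw [e] at h
    exact h
  have hlogb0 : 0 ≤ Real.logb 2 n := Real.logb_nonneg (by norm_num)
    (by exact_mod_cast Nat.one_le_iff_ne_zero.2 (by omega))
  have odd_bound : ∀ r i, y (2*r+1) i ≤ Real.logb 2 n + 1 := by
    intro r i
    have h := key r {i}
    simp only [Finset.sum_singleton, Finset.card_singleton] at h
    rw [Gone] at h
    linarith
  intro t i
  obtain ⟨r, rfl | rfl⟩ := Nat.even_or_odd' t
  · cases r with
    | zero =>
      rw [show 2*0 = 0 by ring, hy0 i]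
      linarith
    | succ s =>
      obtain ⟨w, hmax, hz, hkeep⟩ := hzero s
      have e : 2*(s+1) = 2*s+2 := by ring
      rw [e]
      by_cases hiw : i = w
      · rw [hiw, hz]
        linarith
      · rw [hkeep i hiw]
        exact odd_bound s i
  · exact odd_bound r i
end
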